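/- Let f : [0,∞) → ℝ be concave, non-decreasing and satisfy f(0) = 0. Then for every X ∈ ℝ^{m×n} and every k ≥ rank(X), R(X) = min { R̃(B,C) : B ∈ ℝ^{m×k}, C ∈ ℝ^{n×k}, BCᵀ = X }, and the minimum is attained. -/

import Mathlib

noncomputable section
open Matrix Real

theorem Matrix.isHermitian_transpose_mul_self {m n : Type*} [Fintype m] (A : Matrix m n ℝ) :
    (Aᵀ * A).IsHermitian := by
  rw [Matrix.IsHermitian, Matrix.conjTranspose_eq_transpose_of_trivial, Matrix.transpose_mul,
    Matrix.transpose_transpose]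

/-- The singular values of a real `m × n` matrix, in descending order,
indexed by `Fin (min m n)`: square roots of the eigenvalues of `Xᴴ * X`. -/
def sVal {m n : ℕ} (X : Matrix (Fin m) (Fin n) ℝ) (i : Fin (min m n)) : ℝ :=
  Real.sqrt ((Matrix.isHermitian_transpose_mul_self X).eigenvalues
    (Tuple.sort (fun j => -(Matrix.isHermitian_transpose_mul_self X).eigenvalues j)
      (Fin.castLE (Nat.min_le_right m n) i)))

def regR {m n : ℕ} (f : ℝ → ℝ) (X : Matrix (Fin m) (Fin n) ℝ) : ℝ :=
  ∑ i, f (sVal X i)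

def colNormSq {m k : ℕ} (B : Matrix (Fin m) (Fin k) ℝ) (i : Fin k) : ℝ :=
  ∑ j, (B j i) ^ 2

def colNorm {m k : ℕ} (B : Matrix (Fin m) (Fin k) ℝ) (i : Fin k) : ℝ :=
  Real.sqrt (colNormSq B i)

def Rt {m n k : ℕ} (f : ℝ → ℝ) (B : Matrix (Fin m) (Fin k) ℝ)
    (C : Matrix (Fin n) (Fin k) ℝ) : ℝ :=
  ∑ i, f ((colNormSq B i + colNormSq C i) / 2)

/-- Frobenius inner product `⟨X,Y⟩ = tr(XᵀY)`. -/
def frobInner {m n : ℕ} (X Y : Matrix (Fin m) (Fin n) ℝ) : ℝ :=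
  (Xᵀ * Y).trace

def frobSq {m n : ℕ} (X : Matrix (Fin m) (Fin n) ℝ) : ℝ :=
  (Xᵀ * X).trace

def fmu (μ x : ℝ) : ℝ := μ - max (Real.sqrt μ - x) 0 ^ 2

open Module Finset
open scoped RealInnerProductSpace

/-!
For a factorization `X = B Cᵀ` put `e_j = ‖B_j‖ ‖C_j‖`. Balancing the singular value
decomposition, `B_j = √σ_j u_j` and `C_j = √σ_j v_j`, gives `R̃(B, C) = R(X)`.

Conversely, for every `t ≥ 0` we have `∑ min(σ_i, t) ≤ ∑ min(e_j, t)`. The `r` columns with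
`e_j > t` contribute nothing on the orthogonal complement `K` of the corresponding `C_j`, a
subspace of codimension at most `r`; Cauchy interlacing bounds `σ_{i+r}(X)` by the singular
values of `X` restricted to `K`, and by the singular value decomposition of that restriction,
Bessel and Cauchy–Schwarz their sum is at most `∑_{e_j ≤ t} e_j`. On the finitely many values
involved, a concave non-decreasing `f` with `f 0 = 0` is a non-negative combination of the
functions `min(·, t)` and the identity, so these inequalities give `∑ f(σ_i) ≤ ∑ f(e_j)`.
Finally `e_j ≤ (‖B_j‖² + ‖C_j‖²) / 2` and `f` is monotone.
-/

theorem ConcaveOn.slope_le_slope_of_le {𝕜 : Type*} [Field 𝕜] [LinearOrder 𝕜]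
    [IsStrictOrderedRing 𝕜] {s : Set 𝕜} {f : 𝕜 → 𝕜} (hf : ConcaveOn 𝕜 s f)
    {x y z w : 𝕜} (hx : x ∈ s) (hy : y ∈ s) (hz : z ∈ s) (hw : w ∈ s)
    (hxy : x < y) (hyz : y ≤ z) (hzw : z < w) :
    (f w - f z) / (w - z) ≤ (f y - f x) / (y - x) := by
  rcases hyz.lt_or_eq with hyz | rfl
  · exact (hf.slope_anti_adjacent hy hw hyz hzw).trans (hf.slope_anti_adjacent hx hz hxy hyz)
  · exact hf.slope_anti_adjacent hx hw hxy hzw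

theorem ConcaveOn.monotoneOn_sub_slope_mul {f : ℝ → ℝ} (hf : ConcaveOn ℝ (Set.Ici 0) f)
    {t T : ℝ} (htT : t < T) :
    MonotoneOn (fun x => f x - (f T - f t) / (T - t) * x) (Set.Icc 0 t) := by
  intro x hx y hy hxy
  rcases hxy.lt_or_eq with hxy | rfl
  · have hslope := hf.slope_le_slope_of_le hx.1 (hx.1.trans hxy.le)
      (hx.1.trans (hxy.le.trans hy.2)) (hx.1.trans (hxy.le.trans (hy.2.trans htT.le))) hxy hy.2 htT
    rw [le_div_iff₀ (sub_pos.2 hxy)] at hslope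
    dsimp only
    linarith
  · exact le_rfl

theorem sum_le_sum_of_sum_min_le_of_mem {ι κ : Type*} [Fintype ι] [Fintype κ] (W : Finset ℝ)
    (hW : ∀ x ∈ W, 0 < x) {f : ℝ → ℝ} (hconc : ConcaveOn ℝ (Set.Ici 0) f)
    (hmono : MonotoneOn f ↑(insert 0 W)) (hf0 : f 0 = 0) {s : ι → ℝ} {e : κ → ℝ}
    (hs : ∀ i, s i ∈ insert 0 W) (he : ∀ j, e j ∈ insert 0 W)
    (hmin : ∀ t, 0 ≤ t → ∑ i, min (s i) t ≤ ∑ j, min (e j) t) :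
    ∑ i, f (s i) ≤ ∑ j, f (e j) := by
  induction W using Finset.induction_on_max generalizing f s e with
  | empty =>
    simp only [insert_empty, mem_singleton] at hs he
    simp [hs, he, hf0]
  | insert T W hlt ih =>
    -- With `t` the next node below `T` and `k` the slope of `f` on `[t, T]`, `f x - k x` takes
    -- the same value at `t` and `T`, so both families can be truncated at `t`.
    set N := insert (0 : ℝ) W
    have hTpos : 0 < T := hW T (mem_insert_self _ _)
    have hN0 : ∀ x ∈ N, 0 ≤ x := fun x hx =>
      (mem_insert.1 hx).elim (·.symm ▸ le_rfl) fun hx => (hW x (mem_insert_of_mem hx)).le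
    set t := N.max' (insert_nonempty _ _)
    have ht : t ∈ N := N.max'_mem _
    have htT : t < T := (N.max'_lt_iff _).2 fun x hx =>
      (mem_insert.1 hx).elim (· ▸ hTpos) (hlt x)
    have hnode : ∀ x ∈ insert 0 (insert T W), x = T ∨ x ∈ N := by
      simp only [N, mem_insert]; tauto
    have hle : ∀ x ∈ insert 0 (insert T W), x ≤ T := fun x hx =>
      (hnode x hx).elim le_of_eq fun hx => (N.le_max' x hx).trans htT.le
    set k := (f T - f t) / (T - t)
    have hk : 0 ≤ k := div_nonneg (sub_nonneg.2 (hmono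
      (insert_subset_insert 0 (subset_insert T W) ht) (mem_insert_of_mem (mem_insert_self T W))
      htT.le)) (sub_pos.2 htT).le
    set h : ℝ → ℝ := fun x => f x - k * x
    have hcut : ∀ x ∈ insert 0 (insert T W), min x t ∈ N ∧ h (min x t) = h x := by
      have hTt : T - t ≠ 0 := sub_ne_zero.2 htT.ne'
      intro x hx
      rcases hnode x hx with rfl | hx
      · refine ⟨by rwa [min_eq_right htT.le], ?_⟩
        simp only [h, k, min_eq_right htT.le]
        field_simp
        ring
      · exact ⟨by rwa [min_eq_left (N.le_max' x hx)], by rw [min_eq_left (N.le_max' x hx)]⟩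
    have key := ih (f := h) (fun x hx => hW x (mem_insert_of_mem hx))
      (hconc.sub ((convexOn_id (convex_Ici 0)).smul hk))
      ((hconc.monotoneOn_sub_slope_mul htT).mono fun x hx => ⟨hN0 x hx, N.le_max' x hx⟩)
      (by simp [h, hf0]) (s := fun i => min (s i) t) (e := fun j => min (e j) t)
      (fun i => (hcut _ (hs i)).1) (fun j => (hcut _ (he j)).1)
      (fun u hu => by simpa only [min_assoc] using hmin (min t u) (le_min (hN0 t ht) hu))
    have hsum : ∑ i, s i ≤ ∑ j, e j := by
      simpa only [min_eq_left (hle _ (hs _)), min_eq_left (hle _ (he _))] using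
        hmin T hTpos.le
    simp only [(hcut _ (hs _)).2, (hcut _ (he _)).2] at key
    have hf : ∀ x, f x = h x + k * x := fun x => by simp [h]
    simp only [hf, sum_add_distrib, ← mul_sum]
    exact add_le_add key (mul_le_mul_of_nonneg_left hsum hk)

theorem ConcaveOn.sum_le_sum_of_sum_min_le {ι κ : Type*} [Fintype ι] [Fintype κ] {f : ℝ → ℝ}
    (hconc : ConcaveOn ℝ (Set.Ici 0) f) (hmono : MonotoneOn f (Set.Ici 0)) (hf0 : f 0 = 0)
    {s : ι → ℝ} {e : κ → ℝ} (hs : ∀ i, 0 ≤ s i) (he : ∀ j, 0 ≤ e j)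
    (hmin : ∀ t, 0 ≤ t → ∑ i, min (s i) t ≤ ∑ j, min (e j) t) :
    ∑ i, f (s i) ≤ ∑ j, f (e j) := by
  classical
  set W := (univ.image s ∪ univ.image e).filter (0 < ·)
  have hmem : ∀ x, 0 ≤ x → x ∈ univ.image s ∪ univ.image e → x ∈ insert 0 W := by
    intro x hx0 hx
    rcases hx0.eq_or_lt with rfl | hpos
    · exact mem_insert_self _ _
    · exact mem_insert_of_mem (mem_filter.2 ⟨hx, hpos⟩)
  refine sum_le_sum_of_sum_min_le_of_mem W (fun x hx => (mem_filter.1 hx).2) hconc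
    (hmono.mono ?_) hf0 (fun i => hmem _ (hs i) (by simp)) (fun j => hmem _ (he j) (by simp)) hmin
  intro x hx
  rcases mem_insert.1 hx with rfl | hx
  · exact Set.mem_Ici.2 le_rfl
  · exact (mem_filter.1 hx).2.le

theorem Fin.sum_comp_castLE_of_eq_zero {M : Type*} [AddCommMonoid M] {r n : ℕ} (h : r ≤ n)
    {g : Fin n → M} (hg : ∀ i : Fin n, r ≤ (i : ℕ) → g i = 0) :
    ∑ c : Fin r, g (Fin.castLE h c) = ∑ i, g i := by
  refine (sum_map univ (Fin.castLEEmb h) g).symm.trans ?_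
  refine sum_subset (subset_univ _) fun i _ hi => hg i ?_
  by_contra! hir
  exact hi (mem_map.2 ⟨⟨i, hir⟩, mem_univ _, rfl⟩)

section InnerProductSpace

variable {E F : Type*} [NormedAddCommGroup E] [InnerProductSpace ℝ E]
  [NormedAddCommGroup F] [InnerProductSpace ℝ F]

theorem norm_sq_sum_smul_of_pairwise_inner_eq_zero {ι : Type*} [Fintype ι] {y : ι → F}
    (hy : Pairwise fun i j => ⟪y i, y j⟫ = 0) (a : ι → ℝ) :
    ‖∑ i, a i • y i‖ ^ 2 = ∑ i, a i ^ 2 * ‖y i‖ ^ 2 := by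
  rw [← real_inner_self_eq_norm_sq, sum_inner]
  refine sum_congr rfl fun i _ => ?_
  rw [inner_sum, sum_eq_single i (fun j _ hji => by simp [real_inner_smul_left,
    real_inner_smul_right, hy hji.symm]) (by simp)]
  rw [real_inner_self_eq_norm_sq, norm_smul, mul_pow, Real.norm_eq_abs, sq_abs]

theorem Orthonormal.sum_inner_mul_inner_le {ι : Type*} [Fintype ι] {p : ι → F} {q : ι → E}
    (hp : Orthonormal ℝ p) (hq : Orthonormal ℝ q) (b : F) (c : E) :
    ∑ k, ⟪p k, b⟫ * ⟪c, q k⟫ ≤ ‖b‖ * ‖c‖ := by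
  have hb : ∑ k, ⟪p k, b⟫ ^ 2 ≤ ‖b‖ ^ 2 := by
    simpa only [Real.norm_eq_abs, sq_abs] using hp.sum_inner_products_le (s := univ) (x := b)
  have hc : ∑ k, ⟪c, q k⟫ ^ 2 ≤ ‖c‖ ^ 2 := by
    simpa only [Real.norm_eq_abs, sq_abs, real_inner_comm c] using
      hq.sum_inner_products_le (s := univ) (x := c)
  calc ∑ k, ⟪p k, b⟫ * ⟪c, q k⟫
      ≤ √(∑ k, ⟪p k, b⟫ ^ 2) * √(∑ k, ⟪c, q k⟫ ^ 2) := Real.sum_mul_le_sqrt_mul_sqrt _ _ _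
    _ ≤ √(‖b‖ ^ 2) * √(‖c‖ ^ 2) := by gcongr
    _ = ‖b‖ * ‖c‖ := by rw [Real.sqrt_sq (norm_nonneg _), Real.sqrt_sq (norm_nonneg _)]

namespace LinearMap

section Rayleigh

variable {T : E →ₗ[ℝ] F} {ι : Type*} [Fintype ι] {u : ι → E}

theorem exists_norm_sq_eq_sum_of_mem_span (hu : Orthonormal ℝ u)
    (hTu : Pairwise fun i j => ⟪T (u i), T (u j)⟫ = 0) {x : E}
    (hx : x ∈ Submodule.span ℝ (Set.range u)) :
    ∃ a : ι → ℝ, ‖x‖ ^ 2 = ∑ i, a i ^ 2 ∧ ‖T x‖ ^ 2 = ∑ i, a i ^ 2 * ‖T (u i)‖ ^ 2 := by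
  obtain ⟨a, rfl⟩ := (Submodule.mem_span_range_iff_exists_fun ℝ).1 hx
  refine ⟨a, ?_, ?_⟩
  · simp [norm_sq_sum_smul_of_pairwise_inner_eq_zero fun i j hij => hu.inner_eq_zero hij, hu.1]
  · simp only [map_sum, map_smul]
    exact norm_sq_sum_smul_of_pairwise_inner_eq_zero hTu a

theorem mul_norm_le_norm_apply_of_mem_span (hu : Orthonormal ℝ u)
    (hTu : Pairwise fun i j => ⟪T (u i), T (u j)⟫ = 0) {c : ℝ} (hc : 0 ≤ c)
    (h : ∀ i, c ≤ ‖T (u i)‖) {x : E} (hx : x ∈ Submodule.span ℝ (Set.range u)) :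
    c * ‖x‖ ≤ ‖T x‖ := by
  obtain ⟨a, hx, hTx⟩ := exists_norm_sq_eq_sum_of_mem_span hu hTu hx
  refine (sq_le_sq₀ (by positivity) (norm_nonneg _)).1 ?_
  rw [mul_pow, hx, hTx, mul_sum]
  exact sum_le_sum fun i _ => by rw [mul_comm]; gcongr; exact h i

theorem norm_apply_le_mul_norm_of_mem_span (hu : Orthonormal ℝ u)
    (hTu : Pairwise fun i j => ⟪T (u i), T (u j)⟫ = 0) {c : ℝ} (hc : 0 ≤ c)
    (h : ∀ i, ‖T (u i)‖ ≤ c) {x : E} (hx : x ∈ Submodule.span ℝ (Set.range u)) :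
    ‖T x‖ ≤ c * ‖x‖ := by
  obtain ⟨a, hx, hTx⟩ := exists_norm_sq_eq_sum_of_mem_span hu hTu hx
  refine (sq_le_sq₀ (norm_nonneg _) (by positivity)).1 ?_
  rw [mul_pow, hx, hTx, mul_sum]
  exact sum_le_sum fun i _ => by rw [mul_comm (c ^ 2)]; gcongr; exact h i

end Rayleigh

variable [FiniteDimensional ℝ E] [FiniteDimensional ℝ F] (T : E →ₗ[ℝ] F)

def rightSingularVectors : OrthonormalBasis (Fin (finrank ℝ E)) ℝ E :=
  T.isSymmetric_adjoint_comp_self.eigenvectorBasis rfl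

theorem inner_apply_rightSingularVectors (i j : Fin (finrank ℝ E)) :
    ⟪T (T.rightSingularVectors i), T (T.rightSingularVectors j)⟫ =
      if i = j then T.singularValues i ^ 2 else 0 := by
  rw [← adjoint_inner_right, ← comp_apply, rightSingularVectors,
    LinearMap.IsSymmetric.apply_eigenvectorBasis, real_inner_smul_right,
    orthonormal_iff_ite.1 (OrthonormalBasis.orthonormal _), ← T.sq_singularValues_fin rfl]
  split_ifs with h <;> simp [h]

theorem norm_apply_rightSingularVectors (i : Fin (finrank ℝ E)) :
    ‖T (T.rightSingularVectors i)‖ = T.singularValues i := by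
  have h := T.inner_apply_rightSingularVectors i i
  rw [if_pos rfl, real_inner_self_eq_norm_sq] at h
  exact (sq_eq_sq₀ (norm_nonneg _) (T.singularValues_nonneg i)).1 h

theorem pairwise_inner_apply_rightSingularVectors :
    Pairwise fun i j => ⟪T (T.rightSingularVectors i), T (T.rightSingularVectors j)⟫ = 0 :=
  fun i j hij => (T.inner_apply_rightSingularVectors i j).trans (if_neg hij)

theorem sum_range_comp_singularValues_eq_of_le {g : ℝ → ℝ} (hg : g 0 = 0) {N : ℕ}
    (hN : finrank ℝ (range T) ≤ N) :
    ∑ i ∈ Finset.range N, g (T.singularValues i) =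
      ∑ i ∈ Finset.range (finrank ℝ (range T)), g (T.singularValues i) :=
  eventually_constant_sum (fun i hi => by
    rw [T.singularValues_eq_zero_iff_le_finrank_range.2 hi, hg]) hN

theorem singularValues_add_le_singularValues_comp_subtype (K : Submodule ℝ E) {r : ℕ}
    (hr : finrank ℝ E ≤ finrank ℝ K + r) (i : ℕ) :
    T.singularValues (i + r) ≤ (T ∘ₗ K.subtype).singularValues i := by
  set S := T ∘ₗ K.subtype
  by_cases hp : finrank ℝ E ≤ i + r
  · rw [T.singularValues_of_finrank_le hp]
    exact S.singularValues_nonneg i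
  push Not at hp
  set v := T.rightSingularVectors
  set w := S.rightSingularVectors
  set p : Fin (finrank ℝ E) := ⟨i + r, hp⟩
  set i' : Fin (finrank ℝ K) := ⟨i, by omega⟩
  have hv : Orthonormal ℝ fun j : Iic p => v j := v.orthonormal.comp _ Subtype.val_injective
  have hw : Orthonormal ℝ fun j : Ici i' => (w j : E) :=
    (w.orthonormal.comp_linearIsometry K.subtypeₗᵢ).comp _ Subtype.val_injective
  set V := Submodule.span ℝ (Set.range fun j : Iic p => v j)
  set W := Submodule.span ℝ (Set.range fun j : Ici i' => (w j : E))
  have hV : finrank ℝ V = i + r + 1 := by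
    rw [finrank_span_eq_card hv.linearIndependent, Fintype.card_coe, Fin.card_Iic]
  have hW : finrank ℝ W = finrank ℝ K - i := by
    rw [finrank_span_eq_card hw.linearIndependent, Fintype.card_coe, Fin.card_Ici]
  obtain ⟨x, hxV, hxW, hx0⟩ : ∃ x ∈ V, x ∈ W ∧ x ≠ 0 := by
    have h := mt (Submodule.finrank_add_finrank_le_of_disjoint (s := V) (t := W))
      (by have := Submodule.finrank_le V; omega)
    rw [Submodule.disjoint_def] at h
    push Not at h
    exact h
  have hlow : T.singularValues (i + r) * ‖x‖ ≤ ‖T x‖ :=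
    mul_norm_le_norm_apply_of_mem_span hv
      (fun a b hab => T.pairwise_inner_apply_rightSingularVectors (Subtype.val_injective.ne hab))
      (T.singularValues_nonneg _)
      (fun j => (T.norm_apply_rightSingularVectors j).symm ▸
        T.singularValues_antitone (Fin.le_def.1 (mem_Iic.1 j.2))) hxV
  have hup : ‖T x‖ ≤ S.singularValues i * ‖x‖ :=
    norm_apply_le_mul_norm_of_mem_span hw
      (fun a b hab => S.pairwise_inner_apply_rightSingularVectors (Subtype.val_injective.ne hab))
      (S.singularValues_nonneg _)
      (fun j => (S.norm_apply_rightSingularVectors j).symm ▸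
        S.singularValues_antitone (Fin.le_def.1 (mem_Ici.1 j.2))) hxW
  exact le_of_mul_le_mul_right (hlow.trans hup) (norm_pos_iff.2 hx0)

theorem exists_orthonormal_apply_eq_sum :
    ∃ (p : Fin (finrank ℝ (range T)) → F) (q : Fin (finrank ℝ (range T)) → E),
      Orthonormal ℝ p ∧ Orthonormal ℝ q ∧ (∀ c, ⟪p c, T (q c)⟫ = T.singularValues c) ∧
      ∀ x, T x = ∑ c : Fin (finrank ℝ (range T)), (T.singularValues c * ⟪q c, x⟫) • p c := by
  have hr : finrank ℝ (range T) ≤ finrank ℝ E := T.finrank_range_le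
  set v := T.rightSingularVectors
  have hσ : ∀ c : Fin (finrank ℝ (range T)), 0 < T.singularValues c := fun c =>
    T.singularValues_pos_iff_lt_finrank_range.2 c.2
  set q := fun c => v (Fin.castLE hr c)
  set p := fun c : Fin (finrank ℝ (range T)) => (T.singularValues c)⁻¹ • T (q c)
  have hTq : ∀ c, T (q c) = T.singularValues c • p c := fun c => by
    simp only [p, smul_smul, mul_inv_cancel₀ (hσ c).ne', one_smul]
  have hp : Orthonormal ℝ p := by
    rw [orthonormal_iff_ite]
    intro c d
    simp only [p, q, v, real_inner_smul_left, real_inner_smul_right,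
      inner_apply_rightSingularVectors, (Fin.castLE_injective hr).eq_iff]
    split_ifs with hcd
    · subst hcd
      field_simp [(hσ c).ne']
      rfl
    · simp
  refine ⟨p, q, hp, v.orthonormal.comp _ (Fin.castLE_injective hr), fun c => ?_, fun x => ?_⟩
  · rw [hTq, real_inner_smul_right, real_inner_self_eq_norm_sq, hp.1, one_pow, mul_one]
  · conv_lhs => rw [← v.sum_repr' x]
    rw [map_sum, ← Fin.sum_comp_castLE_of_eq_zero hr]
    · refine sum_congr rfl fun c _ => ?_
      rw [map_smul, hTq, smul_smul, mul_comm]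
    · intro i hi
      have h0 : T (v i) = 0 := norm_eq_zero.1 ((T.norm_apply_rightSingularVectors i).trans
        (T.singularValues_eq_zero_iff_le_finrank_range.2 hi))
      rw [map_smul, h0, smul_zero]

theorem exists_apply_eq_sum_norm_sq_eq_singularValues {k : ℕ} (hk : finrank ℝ (range T) ≤ k) :
    ∃ (b : Fin k → F) (c : Fin k → E), (∀ x, T x = ∑ j, ⟪c j, x⟫ • b j) ∧
      (∀ j, ‖b j‖ ^ 2 = T.singularValues j) ∧ ∀ j, ‖c j‖ ^ 2 = T.singularValues j := by
  obtain ⟨p, q, hp, hq, -, hT⟩ := T.exists_orthonormal_apply_eq_sum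
  have hzero : ∀ j : Fin k, ¬ (j : ℕ) < finrank ℝ (range T) → T.singularValues j = 0 :=
    fun j hj => T.singularValues_eq_zero_iff_le_finrank_range.2 (not_lt.1 hj)
  refine ⟨fun j => if h : (j : ℕ) < finrank ℝ (range T) then √(T.singularValues j) • p ⟨j, h⟩
      else 0,
    fun j => if h : (j : ℕ) < finrank ℝ (range T) then √(T.singularValues j) • q ⟨j, h⟩ else 0,
    fun x => ?_, fun j => ?_, fun j => ?_⟩
  · rw [hT, ← Fin.sum_comp_castLE_of_eq_zero hk]
    · refine sum_congr rfl fun c _ => ?_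
      simp only [Fin.val_castLE, c.2, dif_pos, Fin.eta, real_inner_smul_left, smul_smul]
      rw [mul_right_comm, Real.mul_self_sqrt (T.singularValues_nonneg _)]
    · intro j hj
      simp [not_lt.2 hj]
  · by_cases h : (j : ℕ) < finrank ℝ (range T)
    · simp [h, norm_smul, hp.1, Real.sq_sqrt (T.singularValues_nonneg _)]
    · simp [h, hzero j h]
  · by_cases h : (j : ℕ) < finrank ℝ (range T)
    · simp [h, norm_smul, hq.1, Real.sq_sqrt (T.singularValues_nonneg _)]
    · simp [h, hzero j h]

theorem sum_range_singularValues_comp_subtype_le_of_apply_eq_sum (K : Submodule ℝ E)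
    {ι : Type*} (s : Finset ι) (b : ι → F) (c : ι → E)
    (hT : ∀ x ∈ K, T x = ∑ j ∈ s, ⟪c j, x⟫ • b j) (N : ℕ) :
    ∑ i ∈ Finset.range N, (T ∘ₗ K.subtype).singularValues i ≤ ∑ j ∈ s, ‖b j‖ * ‖c j‖ := by
  set S := T ∘ₗ K.subtype
  set r := finrank ℝ (range S)
  obtain ⟨p, q, hp, hq, hpq, -⟩ := S.exists_orthonormal_apply_eq_sum
  have hq' : Orthonormal ℝ fun k => (q k : E) := hq.comp_linearIsometry K.subtypeₗᵢ
  calc ∑ i ∈ Finset.range N, S.singularValues i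
      ≤ ∑ i ∈ Finset.range (N + r), S.singularValues i :=
        sum_le_sum_of_subset_of_nonneg (Finset.range_subset_range.2 (by omega))
          fun i _ _ => S.singularValues_nonneg i
    _ = ∑ i ∈ Finset.range r, S.singularValues i :=
        S.sum_range_comp_singularValues_eq_of_le (g := fun x => x) rfl (by omega)
    _ = ∑ k : Fin r, ⟪p k, T (q k)⟫ := by
        rw [← Fin.sum_univ_eq_sum_range]
        exact sum_congr rfl fun k _ => (hpq k).symm
    _ = ∑ j ∈ s, ∑ k, ⟪p k, b j⟫ * ⟪c j, q k⟫ := by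
        rw [sum_comm]
        refine sum_congr rfl fun k _ => ?_
        rw [hT _ (q k).2, inner_sum]
        simp only [real_inner_smul_right, mul_comm]
    _ ≤ ∑ j ∈ s, ‖b j‖ * ‖c j‖ := sum_le_sum fun j _ => hp.sum_inner_mul_inner_le hq' _ _

theorem sum_range_min_singularValues_le_of_apply_eq_sum {ι : Type*} [Fintype ι] (b : ι → F)
    (c : ι → E) (hT : ∀ x, T x = ∑ j, ⟪c j, x⟫ • b j) (N : ℕ) {t : ℝ} (ht : 0 ≤ t) :
    ∑ i ∈ Finset.range N, min (T.singularValues i) t ≤ ∑ j, min (‖b j‖ * ‖c j‖) t := by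
  classical
  set large := univ.filter fun j => t < ‖b j‖ * ‖c j‖
  set small := univ.filter fun j => ¬ t < ‖b j‖ * ‖c j‖
  set r := large.card
  set K := (Submodule.span ℝ (large.image c : Set E))ᗮ
  have hK : finrank ℝ E ≤ finrank ℝ K + r := by
    have : finrank ℝ (Submodule.span ℝ (large.image c : Set E)) + finrank ℝ K = finrank ℝ E :=
      Submodule.finrank_add_finrank_orthogonal _
    have : finrank ℝ (Submodule.span ℝ (large.image c : Set E)) ≤ r :=
      (finrank_span_finset_le_card (large.image c)).trans card_image_le
    omega
  have hY : ∀ x ∈ K, T x = ∑ j ∈ small, ⟪c j, x⟫ • b j := fun x hx => by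
    rw [hT, ← sum_filter_add_sum_filter_not univ fun j => t < ‖b j‖ * ‖c j‖,
      sum_eq_zero fun j hj => by rw [Submodule.inner_right_of_mem_orthogonal
        (Submodule.subset_span (mem_image_of_mem c hj)) hx, zero_smul], zero_add]
  calc ∑ i ∈ Finset.range N, min (T.singularValues i) t
      ≤ ∑ i ∈ Finset.range (r + N), min (T.singularValues i) t :=
        sum_le_sum_of_subset_of_nonneg (Finset.range_subset_range.2 (by omega))
          fun i _ _ => le_min (T.singularValues_nonneg i) ht
    _ = ∑ i ∈ Finset.range r, min (T.singularValues i) t +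
          ∑ i ∈ Finset.range N, min (T.singularValues (r + i)) t := sum_range_add _ _ _
    _ ≤ r * t + ∑ i ∈ Finset.range N, (T ∘ₗ K.subtype).singularValues i := by
        gcongr with i
        · exact (sum_le_sum fun i _ => min_le_right _ t).trans_eq (by simp)
        · rw [add_comm]
          exact (min_le_left _ _).trans (T.singularValues_add_le_singularValues_comp_subtype _ hK i)
    _ ≤ r * t + ∑ j ∈ small, ‖b j‖ * ‖c j‖ := by
        gcongr
        exact T.sum_range_singularValues_comp_subtype_le_of_apply_eq_sum _ small b c hY N
    _ = ∑ j, min (‖b j‖ * ‖c j‖) t := by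
        rw [← sum_filter_add_sum_filter_not univ fun j => t < ‖b j‖ * ‖c j‖]
        congr 1
        · rw [sum_congr rfl fun j hj => min_eq_right (mem_filter.1 hj).2.le]
          simp [r, large]
        · exact sum_congr rfl fun j hj => (min_eq_left (not_lt.1 (mem_filter.1 hj).2)).symm

theorem sum_range_comp_singularValues_le_of_apply_eq_sum {ι : Type*} [Fintype ι] (b : ι → F)
    (c : ι → E) (hT : ∀ x, T x = ∑ j, ⟪c j, x⟫ • b j) {f : ℝ → ℝ}
    (hconc : ConcaveOn ℝ (Set.Ici 0) f) (hmono : MonotoneOn f (Set.Ici 0)) (hf0 : f 0 = 0)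
    (N : ℕ) : ∑ i ∈ Finset.range N, f (T.singularValues i) ≤ ∑ j, f (‖b j‖ * ‖c j‖) := by
  rw [← Fin.sum_univ_eq_sum_range (fun i => f (T.singularValues i))]
  refine hconc.sum_le_sum_of_sum_min_le hmono hf0 (fun i => T.singularValues_nonneg _)
    (fun j => by positivity) fun t ht => ?_
  rw [Fin.sum_univ_eq_sum_range (fun i => min (T.singularValues i) t)]
  exact T.sum_range_min_singularValues_le_of_apply_eq_sum b c hT N ht

end LinearMap

end InnerProductSpace

theorem LinearMap.IsSymmetric.eigenvalues_congr {𝕜 E : Type*} [RCLike 𝕜] [NormedAddCommGroup E]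
    [InnerProductSpace 𝕜 E] [FiniteDimensional 𝕜 E] {S S' : E →ₗ[𝕜] E} (h : S = S')
    (hS : S.IsSymmetric) (hS' : S'.IsSymmetric) {a b : ℕ} (ha : finrank 𝕜 E = a)
    (hb : finrank 𝕜 E = b) (hab : a = b) :
    hS.eigenvalues ha = hS'.eigenvalues hb ∘ Fin.cast hab := by
  subst h hab
  rfl

theorem Matrix.toEuclideanLin_transpose_mul_self {m n : Type*} [Fintype m] [Fintype n]
    [DecidableEq m] [DecidableEq n] (X : Matrix m n ℝ) :
    (Xᵀ * X).toEuclideanLin = LinearMap.adjoint X.toEuclideanLin ∘ₗ X.toEuclideanLin := by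
  rw [← Matrix.toEuclideanLin_conjTranspose_eq_adjoint,
    Matrix.conjTranspose_eq_transpose_of_trivial]
  exact Matrix.toLpLin_mul_same _ _ _

theorem Matrix.rank_eq_finrank_range_toEuclideanLin {𝕜 m n : Type*} [RCLike 𝕜] [Fintype m]
    [Fintype n] [DecidableEq n] (X : Matrix m n 𝕜) :
    X.rank = finrank 𝕜 (LinearMap.range X.toEuclideanLin) :=
  X.rank_eq_finrank_range_toLin (PiLp.basisFun 2 𝕜 m) (PiLp.basisFun 2 𝕜 n)

theorem Matrix.toEuclideanLin_mul_transpose_apply {m n ι : Type*} [Fintype n] [Fintype ι]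
    [DecidableEq n] (B : Matrix m ι ℝ) (C : Matrix n ι ℝ) (x : EuclideanSpace ℝ n) :
    (B * Cᵀ).toEuclideanLin x = ∑ j, ⟪WithLp.toLp 2 (Cᵀ j), x⟫ • WithLp.toLp 2 (Bᵀ j) := by
  ext a
  simp only [toLpLin_apply, mulVec, dotProduct, mul_apply, transpose_apply, sum_mul,
    PiLp.inner_apply, RCLike.inner_apply, ringHom_apply, WithLp.ofLp_sum, WithLp.ofLp_smul,
    Finset.sum_apply, Pi.smul_apply, smul_eq_mul]
  rw [sum_comm]
  exact sum_congr rfl fun j _ => sum_congr rfl fun i _ => by ring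

theorem sVal_eq_singularValues {m n : ℕ} (X : Matrix (Fin m) (Fin n) ℝ) (i : Fin (min m n)) :
    sVal X i = X.toEuclideanLin.singularValues i := by
  -- The eigenvalues of the matrix `Xᵀ * X` are some permutation of the antitone eigenvalues of
  -- `adjoint T ∘ₗ T`, so sorting them recovers the latter.
  set T := X.toEuclideanLin
  have hX := Matrix.isHermitian_transpose_mul_self X
  set μ := T.isSymmetric_adjoint_comp_self.eigenvalues finrank_euclideanSpace_fin
  obtain ⟨ρ, hρ⟩ : ∃ ρ : Equiv.Perm (Fin n), hX.eigenvalues = μ ∘ ρ := by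
    refine ⟨(Fintype.equivOfCardEq (Fintype.card_fin _)).symm.trans
      (finCongr (Fintype.card_fin n)), ?_⟩
    ext j
    simp only [Matrix.IsHermitian.eigenvalues, Matrix.IsHermitian.eigenvalues₀]
    rw [LinearMap.IsSymmetric.eigenvalues_congr (Matrix.toEuclideanLin_transpose_mul_self X) _
      T.isSymmetric_adjoint_comp_self _ finrank_euclideanSpace_fin (Fintype.card_fin n)]
    rfl
  have hsorted : hX.eigenvalues ∘ Tuple.sort (fun j => -hX.eigenvalues j) = μ := by
    have hanti : Antitone (hX.eigenvalues ∘ Tuple.sort (fun j => -hX.eigenvalues j)) :=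
      fun a b hab => neg_le_neg_iff.mp (Tuple.monotone_sort (fun j => -hX.eigenvalues j) hab)
    rw [hρ] at hanti ⊢
    exact Tuple.unique_antitone (σ := ρ * _) (τ := 1) hanti
      (LinearMap.IsSymmetric.eigenvalues_antitone _ _)
  rw [sVal, ← Fin.val_castLE (Nat.min_le_right m n) i,
    T.singularValues_fin finrank_euclideanSpace_fin (Fin.castLE (Nat.min_le_right m n) i)]
  exact congrArg Real.sqrt (congrFun hsorted _)

theorem regR_eq_sum_range_singularValues {m n : ℕ} (f : ℝ → ℝ) (X : Matrix (Fin m) (Fin n) ℝ) :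
    regR f X = ∑ i ∈ Finset.range (min m n), f (X.toEuclideanLin.singularValues i) := by
  rw [regR, ← Fin.sum_univ_eq_sum_range]
  exact sum_congr rfl fun i _ => by rw [sVal_eq_singularValues]

theorem colNormSq_eq_norm_sq {m k : ℕ} (B : Matrix (Fin m) (Fin k) ℝ) (j : Fin k) :
    colNormSq B j = ‖WithLp.toLp 2 (Bᵀ j)‖ ^ 2 := by
  simp [colNormSq, EuclideanSpace.norm_sq_eq]

theorem regR_mul_transpose_le_Rt {m n k : ℕ} {f : ℝ → ℝ} (hconc : ConcaveOn ℝ (Set.Ici 0) f)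
    (hmono : MonotoneOn f (Set.Ici 0)) (hf0 : f 0 = 0) (B : Matrix (Fin m) (Fin k) ℝ)
    (C : Matrix (Fin n) (Fin k) ℝ) : regR f (B * Cᵀ) ≤ Rt f B C := by
  rw [regR_eq_sum_range_singularValues]
  refine (LinearMap.sum_range_comp_singularValues_le_of_apply_eq_sum _ _ _
    (Matrix.toEuclideanLin_mul_transpose_apply B C) hconc hmono hf0 _).trans
      (sum_le_sum fun j _ => hmono (Set.mem_Ici.2 (by positivity))
        (Set.mem_Ici.2 (by rw [colNormSq_eq_norm_sq, colNormSq_eq_norm_sq]; positivity)) ?_)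
  rw [colNormSq_eq_norm_sq, colNormSq_eq_norm_sq]
  linarith [two_mul_le_add_sq ‖WithLp.toLp 2 (Bᵀ j)‖ ‖WithLp.toLp 2 (Cᵀ j)‖]

theorem exists_mul_transpose_eq_and_Rt_eq_regR {m n k : ℕ} {f : ℝ → ℝ} (hf0 : f 0 = 0)
    (X : Matrix (Fin m) (Fin n) ℝ) (hk : X.rank ≤ k) :
    ∃ (B : Matrix (Fin m) (Fin k) ℝ) (C : Matrix (Fin n) (Fin k) ℝ),
      B * Cᵀ = X ∧ Rt f B C = regR f X := by
  set T := X.toEuclideanLin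
  have hmin : finrank ℝ (LinearMap.range T) ≤ min m n :=
    X.rank_eq_finrank_range_toEuclideanLin ▸ le_min X.rank_le_height X.rank_le_width
  rw [X.rank_eq_finrank_range_toEuclideanLin] at hk
  obtain ⟨b, c, hT, hb, hc⟩ := T.exists_apply_eq_sum_norm_sq_eq_singularValues hk
  refine ⟨Matrix.of fun a j => b j a, Matrix.of fun a j => c j a, ?_, ?_⟩
  · refine Matrix.toEuclideanLin.injective (LinearMap.ext fun x => ?_)
    rw [Matrix.toEuclideanLin_mul_transpose_apply, hT]
    rfl
  · have hB : ∀ j, WithLp.toLp 2 ((Matrix.of fun a j => b j a)ᵀ j) = b j := fun _ => rfl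
    have hC : ∀ j, WithLp.toLp 2 ((Matrix.of fun a j => c j a)ᵀ j) = c j := fun _ => rfl
    simp only [Rt, colNormSq_eq_norm_sq, hB, hC, hb, hc, add_self_div_two]
    rw [Fin.sum_univ_eq_sum_range (fun j => f (T.singularValues j)),
      regR_eq_sum_range_singularValues, T.sum_range_comp_singularValues_eq_of_le hf0 hk,
      T.sum_range_comp_singularValues_eq_of_le hf0 hmin]

/-- For `f` concave, non-decreasing on `[0,∞)` with `f 0 = 0`, and any
`k ≥ rank X`, `R(X)` is the attained minimum of `R̃(B,C) = Σᵢ f((‖Bᵢ‖² + ‖Cᵢ‖²)/2)`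
over all factorizations `X = B Cᵀ` with `k` columns. -/
theorem bilinear_parameterization_Rtilde {m n k : ℕ} (f : ℝ → ℝ)
    (hconc : ConcaveOn ℝ (Set.Ici 0) f) (hmono : MonotoneOn f (Set.Ici 0))
    (hf0 : f 0 = 0) (X : Matrix (Fin m) (Fin n) ℝ) (hk : X.rank ≤ k) :
    IsLeast { s : ℝ | ∃ (B : Matrix (Fin m) (Fin k) ℝ) (C : Matrix (Fin n) (Fin k) ℝ),
        B * Cᵀ = X ∧ s = Rt f B C }
      (regR f X) := by
  obtain ⟨B, C, hBC, hRt⟩ := exists_mul_transpose_eq_and_Rt_eq_regR hf0 X hk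
  refine ⟨⟨B, C, hBC, hRt.symm⟩, ?_⟩
  rintro _ ⟨B, C, rfl, rfl⟩
  exact regR_mul_transpose_le_Rt hconc hmono hf0 B C
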